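/- arXiv:1412.0681 — 8 statements merged into one kernel-verified Lean document; each statement's English description precedes it below -/
import Mathlib

section
/- Let f : [0,1] → [0,1] satisfy f(x) ≤ 2x for all x in [0,1]. Then for all x, y, z in [0,1]: 2·(x(1 - yz) + (1-y)(1 - f(x)·z) + (1-z)(1 - f(x)·y)) ≥ (y(1-z) + z(1-y) + (1-f(x))(1-z) + (1-f(x))(1-y)). -/
/-! The difference 2·LP − ALG is affine in `x` with slope `2(1 - yz) ≥ 0`, and at `x = f(x)/2`
it equals `(2 + 3 f(x))(1 - y)(1 - z) ≥ 0`; since `f(x) ≤ 2x`, it is nonnegative. -/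

theorem two_mul_lp_sub_alg_eq (w x y z : ℝ) :
    2*(x*(1 - y*z) + (1-y)*(1 - w * z) + (1-z)*(1 - w * y))
      - (y*(1-z) + z*(1-y) + (1 - w)*(1-z) + (1 - w)*(1-y))
      = (1 - y*z) * (2*x - w) + (2 + 3*w) * ((1-y)*(1-z)) := by
  ring

theorem alg_le_two_mul_lp {w x y z : ℝ} (hw : 0 ≤ w) (hwx : w ≤ 2*x)
    (hy : y ∈ Set.Icc (0:ℝ) 1) (hz : z ∈ Set.Icc (0:ℝ) 1) :
    y*(1-z) + z*(1-y) + (1 - w)*(1-z) + (1 - w)*(1-y)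
      ≤ 2*(x*(1 - y*z) + (1-y)*(1 - w * z) + (1-z)*(1 - w * y)) := by
  have hyz : y*z ≤ 1 := mul_le_one₀ hy.2 hz.1 hz.2
  have hgap : 0 ≤ (1 - y*z) * (2*x - w) + (2 + 3*w) * ((1-y)*(1-z)) :=
    add_nonneg (mul_nonneg (sub_nonneg.2 hyz) (sub_nonneg.2 hwx))
      (mul_nonneg (by linarith) (mul_nonneg (sub_nonneg.2 hy.2) (sub_nonneg.2 hz.2)))
  linarith [two_mul_lp_sub_alg_eq w x y z]

theorem stmt_1 (f : ℝ → ℝ) (hf : ∀ x ∈ Set.Icc (0:ℝ) 1, f x ∈ Set.Icc (0:ℝ) 1)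
    (hf2 : ∀ x ∈ Set.Icc (0:ℝ) 1, f x ≤ 2*x)
    (x y z : ℝ) (hx : x ∈ Set.Icc (0:ℝ) 1) (hy : y ∈ Set.Icc (0:ℝ) 1)
    (hz : z ∈ Set.Icc (0:ℝ) 1) :
    2*(x*(1 - y*z) + (1-y)*(1 - f x * z) + (1-z)*(1 - f x * y))
      ≥ y*(1-z) + z*(1-y) + (1 - f x)*(1-z) + (1 - f x)*(1-y) :=
  alg_le_two_mul_lp (hf x hx).1 (hf2 x hx) hy hz
end

section
/- With f⁻(x) = sqrt(1 - α(1-2x)) type bounds: for α = 2.025 and x = 0.48, the quadratic inequality (1 + α - 2αx)·t² - 2(2 - αx)·sqrt(1 - α(1-2x))·t + 2·sqrt(1 - α(1-2x)) - α + 1 ≤ 0 in t has both roots greater than 1 - sqrt(1 - αx). Consequently there is no value t = f⁺(x) ≤ 1 - sqrt(1-αx) satisfying the inequality. -/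
/-!
The quadratic has positive leading coefficient and its vertex lies to the right of
`r = 1 - √(1 - αx) ≈ 0.8327`, so it is decreasing on `(-∞, r]`; it therefore suffices that it is
positive at `r`, where it takes the value `≈ 6·10⁻⁴`, which sharp enclosures of `√0.028` and
`√0.919` certify.
-/

lemma quadratic_pos_of_le_of_le_vertex {a b c r t : ℝ} (ha : 0 ≤ a) (hr : a * r ≤ b)
    (hq : 0 < a * r ^ 2 - 2 * b * r + c) (ht : t ≤ r) : 0 < a * t ^ 2 - 2 * b * t + c := by
  have hat : a * t ≤ a * r := mul_le_mul_of_nonneg_left ht ha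
  have hdiff : a * r ^ 2 - 2 * b * r + c ≤ a * t ^ 2 - 2 * b * t + c := by
    nlinarith [mul_nonneg (sub_nonneg.2 ht) (by linarith : 0 ≤ 2 * b - a * (t + r))]
  linarith

lemma sqrt_028_mem : √0.028 ∈ Set.Icc (0.167332 : ℝ) 0.1673321 := by
  constructor
  · rw [Real.le_sqrt] <;> norm_num
  · rw [Real.sqrt_le_left] <;> norm_num

lemma sqrt_919_mem : √0.919 ∈ Set.Icc (0.9586448 : ℝ) 0.9586449 := by
  constructor
  · rw [Real.le_sqrt] <;> norm_num
  · rw [Real.sqrt_le_left] <;> norm_num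

lemma quadratic_at_threshold_pos :
    0 < 1.081 * (1 - √0.028) ^ 2 - 2 * (1.028 * √0.919) * (1 - √0.028) + (2 * √0.919 - 1.025) := by
  obtain ⟨h1l, h1u⟩ := sqrt_028_mem
  obtain ⟨h2l, h2u⟩ := sqrt_919_mem
  have h1sq : √0.028 ^ 2 = (0.028 : ℝ) := Real.sq_sqrt (by norm_num)
  -- with `s₁ = √0.028`, `s₂ = √0.919` the value is `0.086268 - 2.162 s₁ - 0.056 s₂ + 2.056 s₁ s₂`,
  -- decreasing in `s₁` and increasing in `s₂`
  nlinarith [mul_nonneg (sub_nonneg.2 h1u) (sub_nonneg.2 h2l)]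

theorem stmt_6 :
    ∀ t : ℝ, t ≤ 1 - Real.sqrt (1 - 2.025*0.48) →
      ¬ ((1 + 2.025 - 2*2.025*0.48)*t^2
          - 2*(2 - 2.025*0.48)*Real.sqrt (1 - 2.025*(1 - 2*0.48))*t
          + 2*Real.sqrt (1 - 2.025*(1 - 2*0.48)) - 2.025 + 1 ≤ 0) := by
  intro t ht
  rw [show (1 - 2.025*0.48 : ℝ) = 0.028 by norm_num] at ht
  rw [show (1 - 2.025*(1 - 2*0.48) : ℝ) = 0.919 by norm_num, not_le]
  have hvertex : 1.081 * (1 - √0.028) ≤ 1.028 * √0.919 := by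
    linarith [sqrt_028_mem.1, sqrt_919_mem.1]
  have := quadratic_pos_of_le_of_le_vertex (by norm_num) hvertex quadratic_at_threshold_pos ht
  linarith
end

section
/- For all a, b, c in [0,1] with b ≤ a + c, a < 1/3, and c < 2/3: 3·(1 - b + a - (3/2)abc) - (1 + b - 3bc) ≥ 0. -/
/-!
Write `gap a b c = 2 + 3a - 4b + (3 - 9a/2) b c` for `3·LP - ALG`. For `a ≥ 0` and `0 ≤ c ≤ 2/3`
its slope in `b` is at most `-2`, so the triangle inequality `b ≤ a + c` reduces the claim to
`b = a + c`. There, in the variables `1 - 3a ≥ 0` and `2 - 3c ≥ 0`, the gap is a sum of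
nonnegative monomials; it vanishes at the corner `a = 1/3`, `c = 2/3`.
-/

noncomputable def gap (a b c : ℝ) : ℝ := 3 * (1 - b + a - (3/2)*a*b*c) - (1 + b - 3*b*c)

lemma gap_le_gap_of_le {a b b' c : ℝ} (ha : 0 ≤ a) (hc : 0 ≤ c) (hc' : c ≤ 2/3) (hb : b ≤ b') :
    gap a b' c ≤ gap a b c := by
  have hslope : 0 ≤ 4 - 3*c + 9/2*a*c := by linarith [mul_nonneg ha hc]
  have hdiff : gap a b c - gap a b' c = (b' - b) * (4 - 3*c + 9/2*a*c) := by unfold gap; ring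
  linarith [mul_nonneg (sub_nonneg.mpr hb) hslope]

lemma gap_add_eq (a c : ℝ) :
    gap a (a + c) c = (1 - 3*a) * (a + c) + (2 - 3*c) * (1 + 6*a) / 6 + (2 - 3*c)^2 / 6
      + (1 - 3*a)^2 * (2 - 3*c) / 6 + (1 - 3*a) * (2 - 3*c)^2 / 6 := by
  unfold gap; ring

lemma gap_add_nonneg {a c : ℝ} (ha : 0 ≤ a) (ha' : a ≤ 1/3) (hc : 0 ≤ c) (hc' : c ≤ 2/3) :
    0 ≤ gap a (a + c) c := by
  have hx : 0 ≤ 1 - 3*a := by linarith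
  have hy : 0 ≤ 2 - 3*c := by linarith
  have hac : 0 ≤ a + c := by linarith
  have ha6 : 0 ≤ 1 + 6*a := by linarith
  rw [gap_add_eq]
  positivity

theorem stmt_7_general (a b c : ℝ) (ha : a ∈ Set.Icc (0:ℝ) 1)
    (hc : c ∈ Set.Icc (0:ℝ) 1) (htri : b ≤ a + c) (ha3 : a < 1/3) (hc3 : c < 2/3) :
    3*(1 - b + a - (3/2)*a*b*c) - (1 + b - 3*b*c) ≥ 0 :=
  calc 0 ≤ gap a (a + c) c := gap_add_nonneg ha.1 ha3.le hc.1 hc3.le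
    _ ≤ gap a b c := gap_le_gap_of_le ha.1 hc.1 hc3.le htri

theorem stmt_7 (a b c : ℝ) (ha : a ∈ Set.Icc (0:ℝ) 1) (hb : b ∈ Set.Icc (0:ℝ) 1)
    (hc : c ∈ Set.Icc (0:ℝ) 1) (htri : b ≤ a + c) (ha3 : a < 1/3) (hc3 : c < 2/3) :
    3*(1 - b + a - (3/2)*a*b*c) - (1 + b - 3*b*c) ≥ 0 :=
  stmt_7_general a b c ha hc htri ha3 hc3
end

section
/- For all a, b, c in [0,1]: 3·(3 - a - b - c - ab - ac - bc + 3abc) - (3 - 2a - 2b - 2c + ab + bc + ac) ≥ 0; in fact the difference is at least 5(1-a)(1-b) when c ≤ 1. -/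
/-! The gap `3·LP - ALG` is affine in `c` and equals `5(1-a)(1-b)` at `c = 1`, so it splits as
`5(1-a)(1-b) + (1-c)·((1-a)(1-b) + 5a(1-b) + 5b(1-a))`, a sum of products of nonnegative factors. -/

theorem triangle_gap_eq {R : Type*} [CommRing R] (a b c : R) :
    3*(3 - a - b - c - a*b - a*c - b*c + 3*a*b*c) - (3 - 2*a - 2*b - 2*c + a*b + b*c + a*c)
      = 5*(1-a)*(1-b) + (1-c)*((1-a)*(1-b) + 5*a*(1-b) + 5*b*(1-a)) := by
  ring

theorem triangle_gap_slack_nonneg {R : Type*} [CommRing R] [PartialOrder R] [IsOrderedRing R]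
    {a b c : R} (ha0 : 0 ≤ a) (ha1 : a ≤ 1) (hb0 : 0 ≤ b) (hb1 : b ≤ 1) (hc1 : c ≤ 1) :
    0 ≤ (1-c)*((1-a)*(1-b) + 5*a*(1-b) + 5*b*(1-a)) := by
  have h1a : 0 ≤ 1 - a := sub_nonneg.2 ha1
  have h1b : 0 ≤ 1 - b := sub_nonneg.2 hb1
  have h5 : (0 : R) ≤ 5 := by norm_num
  exact mul_nonneg (sub_nonneg.2 hc1) <| add_nonneg
    (add_nonneg (mul_nonneg h1a h1b) (mul_nonneg (mul_nonneg h5 ha0) h1b))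
    (mul_nonneg (mul_nonneg h5 hb0) h1a)

theorem stmt_9 (a b c : ℝ) (ha : a ∈ Set.Icc (0:ℝ) 1) (hb : b ∈ Set.Icc (0:ℝ) 1)
    (hc : c ∈ Set.Icc (0:ℝ) 1) :
    3*(3 - a - b - c - a*b - a*c - b*c + 3*a*b*c) - (3 - 2*a - 2*b - 2*c + a*b + b*c + a*c)
      ≥ 5*(1-a)*(1-b) ∧
    3*(3 - a - b - c - a*b - a*c - b*c + 3*a*b*c) - (3 - 2*a - 2*b - 2*c + a*b + b*c + a*c)
      ≥ 0 := by
  obtain ⟨ha0, ha1⟩ := ha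
  obtain ⟨hb0, hb1⟩ := hb
  have hslack := triangle_gap_slack_nonneg ha0 ha1 hb0 hb1 hc.2
  have hmain : 0 ≤ 5*(1-a)*(1-b) :=
    mul_nonneg (mul_nonneg (by norm_num) (sub_nonneg.2 ha1)) (sub_nonneg.2 hb1)
  rw [triangle_gap_eq]
  constructor <;> linarith
end

section
/- For all a, b, c in [0,1] with a ≥ 1/3: 3·(2 - 2b - 2c + 2bc + a(1 - bc)) - (c + b - 2bc) ≥ 7(1-b)(1-c) ≥ 0. -/
lemma three_mul_lp_sub_alg_sub_eq (a b c : ℝ) :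
    3*(2 - 2*b - 2*c + 2*b*c + a*(1 - b*c)) - (c + b - 2*b*c) - 7*(1-b)*(1-c) =
      (3*a - 1) * (1 - b*c) := by
  ring

theorem stmt_11_general (a b c : ℝ) (hb : b ∈ Set.Icc (0:ℝ) 1)
    (hc : c ∈ Set.Icc (0:ℝ) 1) (ha3 : a ≥ 1/3) :
    3*(2 - 2*b - 2*c + 2*b*c + a*(1 - b*c)) - (c + b - 2*b*c) ≥ 7*(1-b)*(1-c) ∧
    7*(1-b)*(1-c) ≥ 0 := by
  obtain ⟨-, hb1⟩ := hb
  obtain ⟨hc0, hc1⟩ := hc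
  have hslack : 0 ≤ (3*a - 1) * (1 - b*c) :=
    mul_nonneg (by linarith) (sub_nonneg.2 (mul_le_one₀ hb1 hc0 hc1))
  constructor
  · linarith [three_mul_lp_sub_alg_sub_eq a b c]
  · exact mul_nonneg (mul_nonneg (by norm_num) (sub_nonneg.2 hb1)) (sub_nonneg.2 hc1)

theorem stmt_11 (a b c : ℝ) (ha : a ∈ Set.Icc (0:ℝ) 1) (hb : b ∈ Set.Icc (0:ℝ) 1)
    (hc : c ∈ Set.Icc (0:ℝ) 1) (ha3 : a ≥ 1/3) :
    3*(2 - 2*b - 2*c + 2*b*c + a*(1 - b*c)) - (c + b - 2*b*c) ≥ 7*(1-b)*(1-c) ∧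
    7*(1-b)*(1-c) ≥ 0 :=
  stmt_11_general a b c hb hc ha3
end

section
/- For every x in [0,1], the function f(x) defined as 0 for x < 0.19, ((x-0.19)/0.3195)² for 0.19 ≤ x ≤ 0.5095, and 1 for x > 0.5095, satisfies f(x) ≤ 1 - sqrt(1 - 2.06·x) whenever x ≤ 1/2.06. -/
/-!
On the quadratic piece put `t = (x - 0.19) / 0.3195 ∈ [0, 1]`, so that `1 - 2.06 x = 0.6086 - 0.65817 t`.
Since `f⁺ = t²`, the bound `f⁺ ≤ 1 - √(1 - 2.06 x)` follows from the quartic inequality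
`0.6086 - 0.65817 t ≤ (1 - t²)²` for `t ≥ 0`, whose slack never drops below about `0.02`.
Below `0.19` the bound is trivial, and the constant piece lies beyond `1 / 2.06`.
-/

noncomputable def fplus (x : ℝ) : ℝ :=
  if x < 0.19 then 0 else if x ≤ 0.5095 then ((x - 0.19)/0.3195)^2 else 1

lemma quartic_bound {t : ℝ} (ht : 0 ≤ t) : 0.6086 - 0.65817 * t ≤ (1 - t ^ 2) ^ 2 := by
  nlinarith [sq_nonneg (t - 0.9), sq_nonneg (t ^ 2 - 0.81), mul_nonneg (sq_nonneg (t - 0.9)) ht]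

lemma le_one_sub_sqrt_of_le_sq {q y : ℝ} (hq : q ≤ 1) (hy : y ≤ (1 - q) ^ 2) :
    q ≤ 1 - √y := by
  have := (Real.sqrt_le_left (sub_nonneg.2 hq)).2 hy
  linarith

lemma fplus_le_one_sub_sqrt_of_lt {x : ℝ} (hx0 : 0 ≤ x) (hx : x < 0.19) :
    fplus x ≤ 1 - √(1 - 2.06 * x) := by
  have : √(1 - 2.06 * x) ≤ 1 := Real.sqrt_le_one.2 (by linarith)
  simp only [fplus, if_pos hx]
  linarith

lemma fplus_le_one_sub_sqrt_of_mem_Icc {x : ℝ} (h1 : 0.19 ≤ x) (h2 : x ≤ 0.5095) :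
    fplus x ≤ 1 - √(1 - 2.06 * x) := by
  simp only [fplus, if_neg (not_lt.2 h1), if_pos h2]
  obtain ⟨t, rfl⟩ : ∃ t : ℝ, x = 0.19 + 0.3195 * t := ⟨(x - 0.19) / 0.3195, by ring⟩
  have ht0 : 0 ≤ t := by linarith
  have ht1 : t ≤ 1 := by linarith
  have hq : ((0.19 + 0.3195 * t - 0.19) / 0.3195) ^ 2 = t ^ 2 := by ring
  have hy : 1 - 2.06 * (0.19 + 0.3195 * t) = 0.6086 - 0.65817 * t := by ring
  rw [hq, hy]
  exact le_one_sub_sqrt_of_le_sq (by nlinarith) (quartic_bound ht0)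

theorem stmt_13 : ∀ x ∈ Set.Icc (0:ℝ) 1, x ≤ 1/2.06 →
    fplus x ≤ 1 - Real.sqrt (1 - 2.06*x) := by
  rintro x ⟨hx0, -⟩ hx
  rcases lt_or_ge x 0.19 with hlow | hmid
  · exact fplus_le_one_sub_sqrt_of_lt hx0 hlow
  · exact fplus_le_one_sub_sqrt_of_mem_Icc hmid (hx.trans (by norm_num))
end

section
/- Let f(x) = ((x - 0.19)/0.3195)² on [0.19, 0.5095]. Then for all x in [0.19, 0.25], the polynomial (2.06 - 1) - (2.06+1)·f(x)² + 4x(2f(x) - 1) - 2·2.06·x·f(x)·(2x - f(x)) is nonnegative. -/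
theorem stmt_17 : ∀ x ∈ Set.Icc (0.19:ℝ) 0.25,
    (2.06 - 1) - (2.06 + 1)*(((x - 0.19)/0.3195)^2)^2
      + 4*x*(2*((x - 0.19)/0.3195)^2 - 1)
      - 2*2.06*x*((x - 0.19)/0.3195)^2*(2*x - ((x - 0.19)/0.3195)^2) ≥ 0 := by
  rintro x ⟨h1, h2⟩
  have e1 : (0:ℝ) ≤ x - 0.19 := by linarith
  have e2 : (0:ℝ) ≤ 0.25 - x := by linarith
  have key : ∀ u : ℝ, 0 ≤ u → u ≤ 0.06 →
      (0:ℝ) ≤ 500178117123/160000000000000 - 166726039041/4000000000000*u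
        + 62398390257/500000000000*u^2 + 1242520803/2500000000*u^3
        - 155917063/50000000*u^4 + 103/25*u^5 := by
    intro u hu hu2
    nlinarith [mul_nonneg hu (sub_nonneg.2 hu2), sq_nonneg u, sq_nonneg (u-0.06),
      mul_nonneg (mul_nonneg hu hu) (sub_nonneg.2 hu2),
      mul_nonneg (mul_nonneg hu (sub_nonneg.2 hu2)) (sub_nonneg.2 hu2),
      mul_nonneg (mul_nonneg (mul_nonneg hu hu) hu) (sub_nonneg.2 hu2),
      mul_nonneg (mul_nonneg (mul_nonneg hu hu) (sub_nonneg.2 hu2)) (sub_nonneg.2 hu2),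
      mul_nonneg (mul_nonneg (mul_nonneg hu (sub_nonneg.2 hu2)) (sub_nonneg.2 hu2)) (sub_nonneg.2 hu2),
      mul_nonneg (mul_nonneg (mul_nonneg (mul_nonneg hu hu) hu) hu) (sub_nonneg.2 hu2),
      mul_nonneg (mul_nonneg (mul_nonneg (mul_nonneg hu hu) hu) (sub_nonneg.2 hu2)) (sub_nonneg.2 hu2),
      mul_nonneg (mul_nonneg (mul_nonneg (mul_nonneg hu hu) (sub_nonneg.2 hu2)) (sub_nonneg.2 hu2)) (sub_nonneg.2 hu2),
      mul_nonneg (mul_nonneg (mul_nonneg (mul_nonneg hu (sub_nonneg.2 hu2)) (sub_nonneg.2 hu2)) (sub_nonneg.2 hu2)) (sub_nonneg.2 hu2)]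
  have h := key (x - 0.19) e1 (by linarith)
  have hd : (0.3195:ℝ)^4 > 0 := by norm_num
  rw [ge_iff_le, ← sub_nonneg]
  have : (2.06 - 1) - (2.06 + 1)*(((x - 0.19)/0.3195)^2)^2
      + 4*x*(2*((x - 0.19)/0.3195)^2 - 1)
      - 2*2.06*x*((x - 0.19)/0.3195)^2*(2*x - ((x - 0.19)/0.3195)^2)
      = (500178117123/160000000000000 - 166726039041/4000000000000*(x-0.19)
        + 62398390257/500000000000*(x-0.19)^2 + 1242520803/2500000000*(x-0.19)^3
        - 155917063/50000000*(x-0.19)^4 + 103/25*(x-0.19)^5) / 0.3195^4 := by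
    field_simp
    ring
  rw [sub_zero, this]
  positivity
end

section
/- Let f(y) = ((y - 0.19)/0.3195)² for y in [0.19, 0.5095]. Then 2·(2.06·y - 2f(y) + f(y)²) ≥ 0 for all y in [0.19, 0.5095]. -/
/-! In the normalised variable `t = (y - 0.19) / 0.3195` the expression is the quartic
`0.3914 + 0.65817 t - 2 t² + t⁴`, which is nonnegative on all of `t ≥ 0`: its minimum there,
about `0.02`, is attained near `t = 0.9`, which is where the squares in the certificate are centred. -/

lemma quartic_nonneg_of_nonneg (t : ℝ) (ht : 0 ≤ t) :
    0 ≤ 2.06 * (0.19 + 0.3195 * t) - 2 * t ^ 2 + (t ^ 2) ^ 2 := by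
  nlinarith [sq_nonneg (t ^ 2 + 0.9 * t - 1.6), sq_nonneg (t - 0.9),
    mul_nonneg ht (sq_nonneg (t - 0.9))]

theorem stmt_18 : ∀ y ∈ Set.Icc (0.19:ℝ) 0.5095,
    2*(2.06*y - 2*((y - 0.19)/0.3195)^2 + (((y - 0.19)/0.3195)^2)^2) ≥ 0 := by
  rintro y ⟨hy, -⟩
  set t : ℝ := (y - 0.19) / 0.3195 with ht
  have hyt : y = 0.19 + 0.3195 * t := by rw [ht]; field_simp; ring
  have ht0 : 0 ≤ t := div_nonneg (by linarith) (by norm_num)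
  rw [hyt]
  linarith [quartic_nonneg_of_nonneg t ht0]
end
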